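/- Fix positive integers n, r, ℓ and p ∈ [0,1], and let N_r be the number of vertices at graph distance at most r from a given fixed vertex in an Erdős–Rényi random graph on n vertices with edge probability p. Then ‖N_r‖_ℓ ≤ (A(np, ℓ)^{r+1} − 1)/(A(np, ℓ) − 1) ≤ 2·A(np, ℓ)^r, where ‖N_r‖_ℓ := (E[N_r^ℓ])^{1/ℓ}. -/

import Mathlib

open MeasureTheory ProbabilityTheory Real

/-- The constant `A(x, ℓ) = π e^{e−2}·(ℓ/log(e−1))` if `ℓ > x`, and `π e^{e−2}·x` if `ℓ ≤ x`. -/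
noncomputable def Aconst (x : ℝ) (ℓ : ℕ) : ℝ :=
  if x < ℓ then π * Real.exp (Real.exp 1 - 2) * ℓ / Real.log (Real.exp 1 - 1)
  else π * Real.exp (Real.exp 1 - 2) * x

/-- The simple graph on `Fin n` determined by a family of edge indicators. -/
def graphOf {n : ℕ} (ω : Sym2 (Fin n) → Bool) : SimpleGraph (Fin n) where
  Adj i j := i ≠ j ∧ ω s(i, j) = true
  symm := by
    refine ⟨?_⟩
    intro i j h
    exact ⟨h.1.symm, by rw [Sym2.eq_swap]; exact h.2⟩
  loopless := by refine ⟨?_⟩; intro i h; exact h.1 rfl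

/-- The set of vertices at graph distance at most `r` from `i`. -/
def ball {n : ℕ} (G : SimpleGraph (Fin n)) (i : Fin n) (r : ℕ) : Set (Fin n) :=
  {v | ∃ p : G.Walk i v, p.length ≤ r}

/-!
Every vertex within distance `r` of `i` is the endpoint of a path of length `k ≤ r` from `i`,
so `N_r ≤ ∑_{k ≤ r} S_k`, where `S_k` counts the paths of length `k` from `i` present in the
graph; by Minkowski it suffices to show `‖S_k‖_ℓ ≤ (np + 2ℓ)^k ≤ A(np, ℓ)^k`.
Expanding `S_k^ℓ` over `ℓ`-tuples of paths, `E[S_k^ℓ] = ∑ p^{|E(π_1) ∪ ⋯ ∪ E(π_ℓ)|}`.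
Add the paths one at a time and walk along the new one: each step either reuses an edge of the
previous paths (a self-avoiding path has at most two edges at any vertex, so there are at most
`2ℓ` such steps to choose from) or takes one of at most `n` new edges at the price of a factor
`p`. So each new path contributes a factor at most `(np + 2ℓ)^k`.
-/

open Finset Function
open scoped ENNReal

namespace ErdosRenyi

lemma sum_piFinset_succ_pow_card_biUnion {α β R : Type*} [DecidableEq β] [CommSemiring R]
    (S : Finset α) (E : α → Finset β) (q : R) (ℓ : ℕ) :
    ∑ F ∈ Fintype.piFinset (fun _ : Fin (ℓ + 1) => S), q ^ #(univ.biUnion fun t => E (F t)) =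
      ∑ F ∈ Fintype.piFinset (fun _ : Fin ℓ => S), q ^ #(univ.biUnion fun t => E (F t)) *
        ∑ a ∈ S, q ^ #(E a \ univ.biUnion fun t => E (F t)) := by
  have hsplit : Fintype.piFinset (fun _ : Fin (ℓ + 1) => S) =
      (S ×ˢ Fintype.piFinset fun _ : Fin ℓ => S).map (Fin.consEquiv fun _ => α).toEmbedding := by
    have := filter_piFinset_eq_map_consEquiv (fun _ : Fin (ℓ + 1) => S) fun _ => True
    simp only [filter_true] at this
    exact this
  rw [hsplit, sum_map, sum_product, sum_comm]
  refine sum_congr rfl fun F _ => ?_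
  rw [mul_sum]
  refine sum_congr rfl fun a _ => ?_
  have hunion : (univ.biUnion fun t => E (Fin.cons (α := fun _ => α) a F t)) =
      E a ∪ univ.biUnion fun t => E (F t) := by
    ext e
    simp [Fin.exists_fin_succ]
  simp only [Equiv.toEmbedding_apply, Fin.consEquiv_apply, hunion]
  rw [← pow_add, add_comm, card_sdiff_add_card]

section Paths

variable {V : Type*} {k : ℕ}

lemma injective_pathEdge {f : Fin (k + 1) → V} (hf : Injective f) :
    Injective fun j : Fin k => s(f j.castSucc, f j.succ) := by
  intro j j' h
  rcases Sym2.eq_iff.mp h with ⟨h1, -⟩ | ⟨h1, h2⟩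
  · exact Fin.castSucc_injective _ (hf h1)
  · have := congrArg Fin.val (hf h1)
    have := congrArg Fin.val (hf h2)
    simp only [Fin.val_castSucc, Fin.val_succ] at *
    omega

variable [DecidableEq V]

def pathEdges (f : Fin (k + 1) → V) : Finset (Sym2 V) :=
  univ.image fun j : Fin k => s(f j.castSucc, f j.succ)

lemma not_isDiag_of_mem_pathEdges {f : Fin (k + 1) → V} (hf : Injective f) {e : Sym2 V}
    (he : e ∈ pathEdges f) : ¬ e.IsDiag := by
  obtain ⟨j, -, rfl⟩ := mem_image.mp he
  rw [Sym2.mk_isDiag_iff]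
  exact hf.ne (Fin.castSucc_lt_succ (i := j)).ne

lemma pow_card_pathEdges_sdiff {M : Type*} [CommMonoid M] {f : Fin (k + 1) → V}
    (hf : Injective f) (U : Finset (Sym2 V)) (q : M) :
    q ^ #(pathEdges f \ U) = ∏ j : Fin k, if s(f j.castSucc, f j.succ) ∈ U then 1 else q := by
  have : pathEdges f \ U = ({j | s(f j.castSucc, f j.succ) ∉ U} : Finset (Fin k)).image
      fun j => s(f j.castSucc, f j.succ) := by
    ext e
    simp only [pathEdges, mem_sdiff, mem_image, mem_univ, true_and, mem_filter]
    constructor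
    · rintro ⟨⟨j, rfl⟩, he⟩; exact ⟨j, he, rfl⟩
    · rintro ⟨j, he, rfl⟩; exact ⟨⟨j, rfl⟩, he⟩
  rw [this, card_image_of_injective _ (injective_pathEdge hf), prod_ite, prod_const_one, one_mul,
    prod_const]

variable [Fintype V]

def pathsFrom (i : V) (k : ℕ) : Finset (Fin (k + 1) → V) := {f | f 0 = i ∧ Injective f}

lemma card_filter_mem_pathEdges_le_two {f : Fin (k + 1) → V} (hf : Injective f) (v : V) :
    #{w | s(v, w) ∈ pathEdges f} ≤ 2 := by
  have hsub : ({w | s(v, w) ∈ pathEdges f} : Finset V) ⊆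
      ({j | f j.castSucc = v} : Finset (Fin k)).image (fun j => f j.succ) ∪
        ({j | f j.succ = v} : Finset (Fin k)).image (fun j => f j.castSucc) := by
    intro w hw
    obtain ⟨j, -, hj⟩ := mem_image.mp (mem_filter.mp hw).2
    rcases Sym2.eq_iff.mp hj with ⟨h1, h2⟩ | ⟨h1, h2⟩
    · exact mem_union_left _ (mem_image.mpr ⟨j, by simpa using h1, h2⟩)
    · exact mem_union_right _ (mem_image.mpr ⟨j, by simpa using h2, h1⟩)
  have hone {g : Fin k → Fin (k + 1)} (hg : Injective g) : #({j | f (g j) = v} : Finset _) ≤ 1 :=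
    card_le_one.mpr fun a ha b hb => hg (hf ((mem_filter.mp ha).2.trans (mem_filter.mp hb).2.symm))
  calc #{w | s(v, w) ∈ pathEdges f}
      ≤ #(({j | f j.castSucc = v} : Finset (Fin k)).image (fun j => f j.succ)) +
          #(({j | f j.succ = v} : Finset (Fin k)).image (fun j => f j.castSucc)) :=
        (card_le_card hsub).trans (card_union_le _ _)
    _ ≤ 1 + 1 := add_le_add (card_image_le.trans (hone (Fin.castSucc_injective k)))
        (card_image_le.trans (hone (Fin.succ_injective k)))

lemma sum_filter_apply_zero {M : Type*} [AddCommMonoid M] (u : V) (φ : (Fin (k + 1) → V) → M) :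
    ∑ f with f 0 = u, φ f = ∑ g : Fin k → V, φ (Fin.cons u g) := by
  have : ({f | f 0 = u} : Finset (Fin (k + 1) → V)) =
      univ.map ⟨Fin.cons u, Fin.cons_right_injective (α := fun _ => V) u⟩ := by
    ext f
    simp only [mem_filter, mem_univ, true_and, mem_map, Embedding.coeFn_mk]
    exact ⟨fun h => ⟨Fin.tail f, h ▸ Fin.cons_self_tail f⟩, fun ⟨g, hg⟩ => hg ▸ rfl⟩
  rw [this, sum_map]
  rfl

lemma sum_prod_le_pow (c : V → V → ℝ≥0∞) {B : ℝ≥0∞} (hc : ∀ u, ∑ w, c u w ≤ B) :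
    ∀ (k : ℕ) (u : V),
      ∑ f : Fin (k + 1) → V with f 0 = u, ∏ j : Fin k, c (f j.castSucc) (f j.succ) ≤ B ^ k
  | 0, u => by rw [sum_filter_apply_zero]; simp
  | k + 1, u => by
    calc ∑ f : Fin (k + 2) → V with f 0 = u, ∏ j : Fin (k + 1), c (f j.castSucc) (f j.succ)
        = ∑ w, c u w * ∑ g : Fin (k + 1) → V with g 0 = w,
            ∏ j : Fin k, c (g j.castSucc) (g j.succ) := by
          simp_rw [sum_filter_apply_zero, mul_sum, Fin.prod_univ_succ]
          rw [← (Fin.consEquiv fun _ => V).sum_comp, Fintype.sum_prod_type]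
          simp [Fin.consEquiv]
      _ ≤ ∑ w, c u w * B ^ k := by gcongr with w; exact sum_prod_le_pow c hc k w
      _ ≤ B ^ (k + 1) := by rw [← sum_mul, pow_succ']; gcongr; exact hc u

lemma sum_pow_card_pathEdges_sdiff_le (i : V) (k : ℕ) (q : ℝ≥0∞) {U : Finset (Sym2 V)} {D : ℕ}
    (hU : ∀ v, #{w | s(v, w) ∈ U} ≤ D) :
    ∑ f ∈ pathsFrom i k, q ^ #(pathEdges f \ U) ≤ (Fintype.card V * q + D) ^ k := by
  set c : V → V → ℝ≥0∞ := fun u w => if s(u, w) ∈ U then 1 else q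
  have hc (u : V) : ∑ w, c u w ≤ Fintype.card V * q + D := by
    calc ∑ w, c u w = #{w | s(u, w) ∉ U} * q + #{w | s(u, w) ∈ U} := by
          simp [c, sum_ite, nsmul_eq_mul, add_comm]
      _ ≤ Fintype.card V * q + D := by
          gcongr
          · exact_mod_cast card_le_univ _
          · exact_mod_cast hU u
  calc ∑ f ∈ pathsFrom i k, q ^ #(pathEdges f \ U)
      = ∑ f ∈ pathsFrom i k, ∏ j : Fin k, c (f j.castSucc) (f j.succ) :=
        sum_congr rfl fun f hf => pow_card_pathEdges_sdiff (mem_filter.mp hf).2.2 U q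
    _ ≤ ∑ f : Fin (k + 1) → V with f 0 = i, ∏ j : Fin k, c (f j.castSucc) (f j.succ) :=
        sum_le_sum_of_subset fun f hf => by simp_all [pathsFrom]
    _ ≤ (Fintype.card V * q + D) ^ k := sum_prod_le_pow c hc k i

lemma card_filter_mem_biUnion_pathEdges_le {ℓ : ℕ} {F : Fin ℓ → Fin (k + 1) → V}
    (hF : ∀ t, Injective (F t)) (v : V) :
    #{w | s(v, w) ∈ univ.biUnion fun t => pathEdges (F t)} ≤ 2 * ℓ := by
  calc #{w | s(v, w) ∈ univ.biUnion fun t => pathEdges (F t)}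
      = #(univ.biUnion fun t => ({w | s(v, w) ∈ pathEdges (F t)} : Finset V)) := by
        congr 1; ext w; simp
    _ ≤ ∑ t, #{w | s(v, w) ∈ pathEdges (F t)} := card_biUnion_le
    _ ≤ ∑ _t : Fin ℓ, 2 := sum_le_sum fun t _ => card_filter_mem_pathEdges_le_two (hF t) v
    _ = 2 * ℓ := by simp [mul_comm]

lemma sum_pow_card_biUnion_pathEdges_le (i : V) (k : ℕ) (q : ℝ≥0∞) :
    ∀ ℓ : ℕ, ∑ F ∈ Fintype.piFinset fun _ : Fin ℓ => pathsFrom i k,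
        q ^ #(univ.biUnion fun t => pathEdges (F t)) ≤ (Fintype.card V * q + 2 * ℓ) ^ (k * ℓ)
  | 0 => by simp
  | ℓ + 1 => by
    rw [sum_piFinset_succ_pow_card_biUnion]
    calc _ ≤ ∑ F ∈ Fintype.piFinset fun _ : Fin ℓ => pathsFrom i k,
            q ^ #(univ.biUnion fun t => pathEdges (F t)) *
              (Fintype.card V * q + (2 * ℓ : ℕ)) ^ k := by
          gcongr with F hF
          exact sum_pow_card_pathEdges_sdiff_le i k q <| card_filter_mem_biUnion_pathEdges_le
            fun t => (mem_filter.mp (Fintype.mem_piFinset.mp hF t)).2.2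
      _ ≤ (Fintype.card V * q + 2 * ℓ) ^ (k * ℓ) * (Fintype.card V * q + 2 * ℓ) ^ k := by
          rw [← sum_mul]
          push_cast
          gcongr
          exact sum_pow_card_biUnion_pathEdges_le i k q ℓ
      _ ≤ (Fintype.card V * q + 2 * ↑(ℓ + 1)) ^ (k * (ℓ + 1)) := by
          rw [← pow_add, ← mul_add_one]
          refine pow_le_pow_left' ?_ _
          push_cast
          gcongr
          simp

end Paths

section Moments

variable {Ω ι : Type*} [MeasurableSpace Ω] {P : Measure Ω} {X : ι → Ω → Bool} {q : ℝ≥0∞}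

lemma measure_forall_mem_eq_pow (hX : iIndepFun X P) {U : Finset ι}
    (hq : ∀ e ∈ U, P {ω | X e ω = true} = q) : P {ω | ∀ e ∈ U, X e ω = true} = q ^ #U := by
  have : {ω | ∀ e ∈ U, X e ω = true} = ⋂ e ∈ U, {ω | X e ω = true} := by ext; simp
  rw [this, hX.meas_biInter (s := fun e => {ω | X e ω = true}) fun e _ => ⟨{true}, trivial, rfl⟩,
    prod_congr rfl hq, prod_const]

lemma lintegral_card_filter_pow [DecidableEq ι] (hX : iIndepFun X P)
    (hXm : ∀ e, Measurable (X e)) {α : Type*} (s : Finset α) (E : α → Finset ι)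
    (hq : ∀ a ∈ s, ∀ e ∈ E a, P {ω | X e ω = true} = q) (ℓ : ℕ) :
    ∫⁻ ω, (#{a ∈ s | ∀ e ∈ E a, X e ω = true} : ℝ≥0∞) ^ ℓ ∂P =
      ∑ F ∈ Fintype.piFinset (fun _ : Fin ℓ => s), q ^ #(univ.biUnion fun t => E (F t)) := by
  have hcount (ω : Ω) : (#{a ∈ s | ∀ e ∈ E a, X e ω = true} : ℝ≥0∞) ^ ℓ =
      ∑ F ∈ Fintype.piFinset (fun _ : Fin ℓ => s),
        {ω | ∀ e ∈ univ.biUnion fun t => E (F t), X e ω = true}.indicator 1 ω := by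
    classical
    rw [natCast_card_filter, ← Fin.prod_const, prod_univ_sum]
    refine sum_congr rfl fun F _ => ?_
    simp only [prod_boole, mem_univ, true_implies, mem_biUnion, true_and]
    rw [Set.indicator_apply]
    exact if_congr ⟨fun h e ⟨t, het⟩ => h t e het, fun h t e het => h e ⟨t, het⟩⟩ rfl rfl
  have hmeas (U : Finset ι) : MeasurableSet {ω | ∀ e ∈ U, X e ω = true} := by
    simp only [Set.ofPred_forall]
    exact .biInter U.countable_toSet fun e _ => hXm e (measurableSet_singleton true)
  simp_rw [hcount]
  rw [lintegral_finsetSum _ fun F _ => (measurable_one.indicator (hmeas _))]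
  refine sum_congr rfl fun F hF => ?_
  rw [lintegral_indicator_one (hmeas _), measure_forall_mem_eq_pow hX]
  intro e he
  obtain ⟨t, -, het⟩ := mem_biUnion.mp he
  exact hq _ (Fintype.mem_piFinset.mp hF t) e het

lemma integral_pow_rpow_inv_eq_toReal_eLpNorm {Ω : Type*} [MeasurableSpace Ω] {P : Measure Ω}
    {f : Ω → ℝ} (hf₀ : 0 ≤ f) {ℓ : ℕ} (hℓ : ℓ ≠ 0) (hf : MemLp f ℓ P) :
    (∫ ω, f ω ^ ℓ ∂P) ^ (ℓ : ℝ)⁻¹ = (eLpNorm f ℓ P).toReal := by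
  rw [hf.eLpNorm_eq_integral_rpow_norm (by exact_mod_cast hℓ) (ENNReal.natCast_ne_top ℓ),
    ENNReal.toReal_ofReal (by positivity)]
  simp [Real.norm_of_nonneg (hf₀ _)]

end Moments

section RandomGraph

variable {V : Type*} [Fintype V] [DecidableEq V]

def pathCount (ω : Sym2 V → Bool) (i : V) (k : ℕ) : ℕ :=
  #{f ∈ pathsFrom i k | ∀ e ∈ pathEdges f, ω e = true}

lemma eLpNorm_pathCount_le {P : Measure (Sym2 V → Bool)} {q : ℝ≥0∞}
    (hindep : iIndepFun (fun e ω => ω e) P)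
    (hp : ∀ e : Sym2 V, ¬ e.IsDiag → P {ω | ω e = true} = q) (i : V) (k : ℕ) {ℓ : ℕ}
    (hℓ : ℓ ≠ 0) :
    eLpNorm (fun ω => (pathCount ω i k : ℝ)) ℓ P ≤ (Fintype.card V * q + 2 * ℓ) ^ k := by
  have hℓ' : (ℓ : ℝ) ≠ 0 := by exact_mod_cast hℓ
  have hmoment : ∫⁻ ω, (pathCount ω i k : ℝ≥0∞) ^ ℓ ∂P =
      ∑ F ∈ Fintype.piFinset fun _ : Fin ℓ => pathsFrom i k,
        q ^ #(univ.biUnion fun t => pathEdges (F t)) := by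
    simp only [pathCount]
    -- `convert` reconciles the decidability instances of the two filters.
    convert lintegral_card_filter_pow hindep (fun e => measurable_pi_apply e) (pathsFrom i k)
      pathEdges (fun f hf e he => hp e (not_isDiag_of_mem_pathEdges (mem_filter.mp hf).2.2 he)) ℓ
  rw [eLpNorm_eq_lintegral_rpow_enorm_toReal (by exact_mod_cast hℓ) (ENNReal.natCast_ne_top ℓ)]
  simp only [ENNReal.toReal_natCast, Real.enorm_natCast, ENNReal.rpow_natCast]
  rw [hmoment]
  calc (∑ F ∈ Fintype.piFinset fun _ : Fin ℓ => pathsFrom i k,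
          q ^ #(univ.biUnion fun t => pathEdges (F t))) ^ (1 / (ℓ : ℝ))
      ≤ ((Fintype.card V * q + 2 * ℓ) ^ (k * ℓ)) ^ (1 / (ℓ : ℝ)) := by
        gcongr; exact sum_pow_card_biUnion_pathEdges_le i k q ℓ
    _ = (Fintype.card V * q + 2 * ℓ) ^ k := by
        rw [pow_mul, ← ENNReal.rpow_natCast _ ℓ, ← ENNReal.rpow_mul, mul_one_div_cancel hℓ',
          ENNReal.rpow_one]

end RandomGraph

section Ball

variable {n : ℕ}

lemma ncard_ball_le_sum_card_paths (G : SimpleGraph (Fin n)) [DecidableRel G.Adj] (i : Fin n)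
    (r : ℕ) : (ball G i r).ncard ≤
      ∑ k ∈ range (r + 1), #{f ∈ pathsFrom i k | ∀ j : Fin k, G.Adj (f j.castSucc) (f j.succ)} := by
  set T := (range (r + 1)).sigma fun k =>
    {f ∈ pathsFrom i k | ∀ j : Fin k, G.Adj (f j.castSucc) (f j.succ)}
  set endpoint := fun x : (k : ℕ) × (Fin (k + 1) → Fin n) => x.2 (Fin.last x.1)
  have hsub : ball G i r ⊆ endpoint '' T := by
    rintro v ⟨w, hw⟩
    have hpath := w.bypass_isPath
    refine ⟨⟨w.bypass.length, fun j => w.bypass.getVert j⟩, ?_, w.bypass.getVert_length⟩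
    simp only [T, coe_sigma, Set.mem_sigma_iff, coe_range, Set.mem_Iio, mem_coe, pathsFrom,
      mem_filter, mem_univ, true_and]
    refine ⟨Nat.lt_succ_of_le (w.length_bypass_le_length.trans hw), ⟨w.bypass.getVert_zero, ?_⟩,
      fun j => w.bypass.adj_getVert_succ j.isLt⟩
    intro a b hab
    exact Fin.ext (hpath.getVert_injOn (Nat.lt_succ_iff.mp a.isLt) (Nat.lt_succ_iff.mp b.isLt) hab)
  calc (ball G i r).ncard ≤ (endpoint '' (T : Set _)).ncard :=
        Set.ncard_le_ncard hsub (Set.toFinite _)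
    _ ≤ #T := (Set.ncard_image_le T.finite_toSet).trans_eq (Set.ncard_coe_finset T)
    _ = _ := card_sigma _ _

lemma ncard_ball_graphOf_le (ω : Sym2 (Fin n) → Bool) (i : Fin n) (r : ℕ) :
    (ball (graphOf ω) i r).ncard ≤ ∑ k ∈ range (r + 1), pathCount ω i k := by
  classical
  refine (ncard_ball_le_sum_card_paths _ i r).trans_eq (sum_congr rfl fun k _ => ?_)
  refine congrArg card (filter_congr fun f hf => ?_)
  have hf : Injective f := (mem_filter.mp hf).2.2
  simp only [pathEdges, mem_image, mem_univ, true_and, forall_exists_index,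
    forall_apply_eq_imp_iff]
  exact forall_congr' fun j => and_iff_right (hf.ne (Fin.castSucc_lt_succ (i := j)).ne)

lemma eLpNorm_ncard_ball_le {P : Measure (Sym2 (Fin n) → Bool)} {q : ℝ≥0∞}
    (hindep : iIndepFun (fun e ω => ω e) P)
    (hp : ∀ e : Sym2 (Fin n), ¬ e.IsDiag → P {ω | ω e = true} = q) (i : Fin n) (r : ℕ) {ℓ : ℕ}
    (hℓ : 1 ≤ ℓ) :
    eLpNorm (fun ω => ((ball (graphOf ω) i r).ncard : ℝ)) ℓ P ≤
      ∑ k ∈ range (r + 1), (n * q + 2 * ℓ) ^ k := by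
  calc eLpNorm (fun ω => ((ball (graphOf ω) i r).ncard : ℝ)) ℓ P
      ≤ eLpNorm (∑ k ∈ range (r + 1), fun ω => (pathCount ω i k : ℝ)) ℓ P := by
        refine eLpNorm_mono fun ω => ?_
        simp only [Finset.sum_apply, ← Nat.cast_sum, Real.norm_natCast, Nat.cast_le]
        exact ncard_ball_graphOf_le ω i r
    _ ≤ ∑ k ∈ range (r + 1), eLpNorm (fun ω => (pathCount ω i k : ℝ)) ℓ P :=
        eLpNorm_sum_le (fun _ _ => (measurable_of_countable _).aestronglyMeasurable)
          (by exact_mod_cast hℓ)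
    _ ≤ ∑ k ∈ range (r + 1), (n * q + 2 * ℓ) ^ k := by
        gcongr with k
        simpa using eLpNorm_pathCount_le hindep hp i k (by omega)

end Ball

section Constant

lemma three_le_pi_mul_exp : 3 ≤ π * exp (exp 1 - 2) := by
  have hexp : 1 ≤ exp (exp 1 - 2) := one_le_exp (by linarith [exp_one_gt_d9])
  nlinarith [pi_gt_three]

lemma three_mul_le_Aconst (x : ℝ) (ℓ : ℕ) : 3 * (ℓ : ℝ) ≤ Aconst x ℓ := by
  have hE := three_le_pi_mul_exp
  unfold Aconst
  split_ifs with hx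
  · have hlog : 0 < log (exp 1 - 1) := log_pos (by linarith [exp_one_gt_d9])
    have hlog1 : log (exp 1 - 1) ≤ 1 := by
      linarith [log_le_sub_one_of_pos (by linarith [exp_one_gt_d9] : 0 < exp 1 - 1),
        exp_one_lt_d9]
    calc 3 * (ℓ : ℝ) ≤ π * exp (exp 1 - 2) * ℓ := by gcongr
      _ ≤ π * exp (exp 1 - 2) * ℓ / log (exp 1 - 1) := le_div_self (by positivity) hlog hlog1
  · nlinarith [not_lt.mp hx, (Nat.cast_nonneg ℓ : (0 : ℝ) ≤ ℓ)]

lemma add_two_mul_le_Aconst (x : ℝ) (ℓ : ℕ) : x + 2 * ℓ ≤ Aconst x ℓ := by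
  rcases lt_or_ge x ℓ with hx | hx
  · linarith [three_mul_le_Aconst x ℓ]
  · have hE := three_le_pi_mul_exp
    rw [Aconst, if_neg (not_lt.mpr hx)]
    nlinarith [(Nat.cast_nonneg ℓ : (0 : ℝ) ≤ ℓ)]

lemma ofReal_add_two_mul_le_Aconst (x : ℝ) (ℓ : ℕ) :
    ENNReal.ofReal x + 2 * ℓ ≤ ENNReal.ofReal (Aconst x ℓ) := by
  have h2ℓ : (2 * ℓ : ℝ≥0∞) = ENNReal.ofReal (2 * ℓ) := by
    rw [ENNReal.ofReal_mul zero_le_two, ENNReal.ofReal_ofNat, ENNReal.ofReal_natCast]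
  rcases le_total x 0 with hx | hx
  · rw [ENNReal.ofReal_of_nonpos hx, zero_add, h2ℓ]
    exact ENNReal.ofReal_le_ofReal
      (by linarith [three_mul_le_Aconst x ℓ, (Nat.cast_nonneg ℓ : (0 : ℝ) ≤ ℓ)])
  · rw [h2ℓ, ← ENNReal.ofReal_add hx (by positivity)]
    exact ENNReal.ofReal_le_ofReal (add_two_mul_le_Aconst x ℓ)

lemma geom_sum_div_le_two_mul_pow {A : ℝ} (hA : 2 ≤ A) (r : ℕ) :
    (A ^ (r + 1) - 1) / (A - 1) ≤ 2 * A ^ r := by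
  rw [div_le_iff₀ (by linarith), pow_succ]
  nlinarith [one_le_pow₀ (by linarith : 1 ≤ A) (n := r)]

end Constant

end ErdosRenyi

open ErdosRenyi in
theorem stmt_19_general (n r ℓ : ℕ) (hℓ : 1 ≤ ℓ)
    (p : ℝ)
    (P : Measure (Sym2 (Fin n) → Bool)) [IsProbabilityMeasure P]
    (hindep : iIndepFun (fun e ω => ω e) P)
    (hp : ∀ e : Sym2 (Fin n), ¬ e.IsDiag → P {ω | ω e = true} = ENNReal.ofReal p)
    (i : Fin n) :
    (∫ ω, ((ball (graphOf ω) i r).ncard : ℝ) ^ ℓ ∂P) ^ ((ℓ : ℝ)⁻¹)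
        ≤ (Aconst (n * p) ℓ ^ (r + 1) - 1) / (Aconst (n * p) ℓ - 1)
    ∧ (Aconst (n * p) ℓ ^ (r + 1) - 1) / (Aconst (n * p) ℓ - 1)
        ≤ 2 * Aconst (n * p) ℓ ^ r := by
  set A := Aconst (n * p) ℓ
  have hA : 2 ≤ A := by
    have : (1 : ℝ) ≤ ℓ := by exact_mod_cast hℓ
    linarith [three_mul_le_Aconst (n * p) ℓ]
  refine ⟨?_, geom_sum_div_le_two_mul_pow hA r⟩
  have hN : MemLp (fun ω => ((ball (graphOf ω) i r).ncard : ℝ)) ℓ P :=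
    MemLp.of_bound (measurable_of_countable _).aestronglyMeasurable n (ae_of_all _ fun ω => by
      simpa using Set.ncard_le_card (ball (graphOf ω) i r))
  have hB : (n : ℝ≥0∞) * ENNReal.ofReal p + 2 * ℓ ≤ ENNReal.ofReal A := by
    rw [← ENNReal.ofReal_natCast, ← ENNReal.ofReal_mul (Nat.cast_nonneg n)]
    exact ofReal_add_two_mul_le_Aconst _ _
  rw [integral_pow_rpow_inv_eq_toReal_eLpNorm (fun ω => Nat.cast_nonneg _) (by omega) hN,
    ← geom_sum_eq (by linarith : A ≠ 1)]
  calc (eLpNorm _ ℓ P).toReal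
      ≤ (∑ k ∈ range (r + 1), ENNReal.ofReal A ^ k).toReal := by
        refine ENNReal.toReal_mono (by simp) ((eLpNorm_ncard_ball_le hindep hp i r hℓ).trans ?_)
        gcongr
    _ = ∑ k ∈ range (r + 1), A ^ k := by
        simp [ENNReal.toReal_sum, ENNReal.toReal_ofReal (by linarith : 0 ≤ A)]

/-- **Lemma (neighbourhood moment bound)**: in an Erdős–Rényi random graph with edge
probability `p`, the number `N_r` of vertices within distance `r` of a fixed vertex
satisfies `‖N_r‖_ℓ ≤ (A(np,ℓ)^{r+1} − 1)/(A(np,ℓ) − 1) ≤ 2 A(np,ℓ)^r`. -/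
theorem stmt_19 (n r ℓ : ℕ) (hn : 1 ≤ n) (hr : 1 ≤ r) (hℓ : 1 ≤ ℓ)
    (p : ℝ) (hp0 : 0 ≤ p) (hp1 : p ≤ 1)
    (P : Measure (Sym2 (Fin n) → Bool)) [IsProbabilityMeasure P]
    (hindep : iIndepFun (fun e ω => ω e) P)
    (hp : ∀ e : Sym2 (Fin n), ¬ e.IsDiag → P {ω | ω e = true} = ENNReal.ofReal p)
    (i : Fin n) :
    (∫ ω, ((ball (graphOf ω) i r).ncard : ℝ) ^ ℓ ∂P) ^ ((ℓ : ℝ)⁻¹)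
        ≤ (Aconst (n * p) ℓ ^ (r + 1) - 1) / (Aconst (n * p) ℓ - 1)
    ∧ (Aconst (n * p) ℓ ^ (r + 1) - 1) / (Aconst (n * p) ℓ - 1)
        ≤ 2 * Aconst (n * p) ℓ ^ r :=
  stmt_19_general n r ℓ hℓ p P hindep hp i
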